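/- arXiv:2103.07344 — 2 statements merged into one kernel-verified Lean document; each statement's English description precedes it below -/
import Mathlib

section
/- If a 3-dimensional polycubic chain Q₁,…,Qₙ whose body Q₁ ∪ ⋯ ∪ Qₙ is a cube a + [0,s]³ (a ∈ ℤ³, s ∈ ℕ, n = s³) has more than 8 fractions, then it contains a 5-cubic segment with empty intersection, i.e. there is an index i with 1 ≤ i ≤ n − 4 such that Qᵢ ∩ Qᵢ₊₁ ∩ Qᵢ₊₂ ∩ Qᵢ₊₃ ∩ Qᵢ₊₄ = ∅. -/
open Set

/-- The unit lattice cube with corner `v ∈ ℤ^d`. -/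
def cubeAt (d : ℕ) (v : Fin d → ℤ) : Set (EuclideanSpace ℝ (Fin d)) :=
  {x | ∀ i, x i ∈ Icc (v i : ℝ) ((v i : ℝ) + 1)}

/-- A polycubic chain of length `n` in `ℝ^d`, given by the corners `c 0, …, c (n-1)`:
the corners are pairwise distinct and consecutive corners differ by a vector in
`{-1,0,1}^d \ {0}`. -/
def IsPolycubicChain (d n : ℕ) (c : ℕ → Fin d → ℤ) : Prop :=
  (∀ i j, i < n → j < n → c i = c j → i = j) ∧
  ∀ i, i + 1 < n →
    (∀ idx, c (i + 1) idx - c i idx ∈ ({-1, 0, 1} : Set ℤ)) ∧ c (i + 1) ≠ c i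

/-- The chain is facet-continuous: each step is ± a standard basis vector. -/
def FacetContinuous (d n : ℕ) (c : ℕ → Fin d → ℤ) : Prop :=
  ∀ i, i + 1 < n → ∃ j : Fin d,
    (c (i + 1) j - c i j = 1 ∨ c (i + 1) j - c i j = -1) ∧
    ∀ idx, idx ≠ j → c (i + 1) idx = c i idx

/-- The dilation of a polycubic chain: the maximum over all segments of
`diam^d / volume` of the body of the segment. -/
noncomputable def chainDilation (d n : ℕ) (c : ℕ → Fin d → ℤ) : ℝ :=
  sSup {w : ℝ | ∃ i j : ℕ, i ≤ j ∧ j < n ∧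
    w = Metric.diam (⋃ k ∈ Finset.Icc i j, cubeAt d (c k)) ^ d / ((j - i + 1 : ℕ) : ℝ)}

/-!
If every five consecutive cubes shared a point, cubes at most four steps apart would be
Chebyshev-adjacent. A corner cell of the `s × s × s` block has only the `2 × 2 × 2` cells at
its own corner within Chebyshev distance one, so it cannot sit in the middle of nine distinct
consecutive cubes: every corner is visited among the first or the last four cubes. Two
distinct corners are at distance `s - 1 ≥ 2`, so neither end can host two of them, yet there
are at least three corners.
-/

section Cubes

variable {d : ℕ}

lemma abs_sub_le_one_of_mem_cubeAt {v w : Fin d → ℤ} {x : EuclideanSpace ℝ (Fin d)}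
    (hv : x ∈ cubeAt d v) (hw : x ∈ cubeAt d w) (j : Fin d) : |v j - w j| ≤ 1 := by
  obtain ⟨hv₁, hv₂⟩ := hv j
  obtain ⟨hw₁, hw₂⟩ := hw j
  rw [abs_sub_le_iff]
  constructor
  · exact_mod_cast (by linarith : (v j : ℝ) - w j ≤ 1)
  · exact_mod_cast (by linarith : (w j : ℝ) - v j ≤ 1)

noncomputable def cubeCenter (v : Fin d → ℤ) : EuclideanSpace ℝ (Fin d) :=
  WithLp.toLp 2 fun i => (v i : ℝ) + 1 / 2

lemma intCast_le_add_half_iff (p q : ℤ) : (p : ℝ) ≤ q + 1 / 2 ↔ p ≤ q := by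
  constructor
  · intro h
    have : (p : ℝ) < (q + 1 : ℤ) := by push_cast; linarith
    exact Int.lt_add_one_iff.mp (by exact_mod_cast this)
  · intro h
    have : (p : ℝ) ≤ q := by exact_mod_cast h
    linarith

lemma add_half_le_intCast_iff (p q : ℤ) : (p : ℝ) + 1 / 2 ≤ q ↔ p < q := by
  constructor
  · intro h
    exact_mod_cast (by linarith : (p : ℝ) < q)
  · intro h
    have : ((p + 1 : ℤ) : ℝ) ≤ q := by exact_mod_cast h
    push_cast at this
    linarith

lemma cubeCenter_mem_cubeAt_iff {v w : Fin d → ℤ} : cubeCenter v ∈ cubeAt d w ↔ v = w := by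
  have key : ∀ i, ((v i : ℝ) + 1 / 2 ∈ Icc (w i : ℝ) ((w i : ℝ) + 1)) ↔ v i = w i := by
    intro i
    rw [mem_Icc, intCast_le_add_half_iff, show (w i : ℝ) + 1 = ((w i + 1 : ℤ) : ℝ) by push_cast; rfl,
      add_half_le_intCast_iff]
    omega
  simp only [cubeCenter, cubeAt, mem_ofPred_eq, key, funext_iff]

lemma cubeCenter_mem_box_iff {v a : Fin d → ℤ} {s : ℕ} :
    cubeCenter v ∈ {x : EuclideanSpace ℝ (Fin d) | ∀ i, x i ∈ Icc (a i : ℝ) (a i + s)} ↔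
      ∀ i, a i ≤ v i ∧ v i < a i + s := by
  have key : ∀ i, ((v i : ℝ) + 1 / 2 ∈ Icc (a i : ℝ) ((a i : ℝ) + s)) ↔
      a i ≤ v i ∧ v i < a i + s := by
    intro i
    rw [mem_Icc, intCast_le_add_half_iff,
      show (a i : ℝ) + s = ((a i + s : ℤ) : ℝ) by push_cast; rfl, add_half_le_intCast_iff]
  simp only [cubeCenter, mem_ofPred_eq, key]

variable {n s : ℕ} {c : ℕ → Fin d → ℤ} {a : Fin d → ℤ}

lemma bounds_of_iUnion_cubeAt_eq_box
    (hbody : (⋃ k ∈ Finset.range n, cubeAt d (c k)) =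
      {x : EuclideanSpace ℝ (Fin d) | ∀ i, x i ∈ Icc ((a i : ℝ)) ((a i : ℝ) + s)})
    {k : ℕ} (hk : k < n) (i : Fin d) : a i ≤ c k i ∧ c k i < a i + s := by
  have : cubeCenter (c k) ∈ ⋃ k ∈ Finset.range n, cubeAt d (c k) :=
    mem_iUnion₂.mpr ⟨k, Finset.mem_range.mpr hk, cubeCenter_mem_cubeAt_iff.mpr rfl⟩
  rw [hbody] at this
  exact cubeCenter_mem_box_iff.mp this i

lemma exists_eq_of_iUnion_cubeAt_eq_box
    (hbody : (⋃ k ∈ Finset.range n, cubeAt d (c k)) =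
      {x : EuclideanSpace ℝ (Fin d) | ∀ i, x i ∈ Icc ((a i : ℝ)) ((a i : ℝ) + s)})
    {v : Fin d → ℤ} (hv : ∀ i, a i ≤ v i ∧ v i < a i + s) : ∃ k < n, c k = v := by
  have : cubeCenter v ∈ ⋃ k ∈ Finset.range n, cubeAt d (c k) := by
    rw [hbody]
    exact cubeCenter_mem_box_iff.mpr hv
  obtain ⟨k, hk, hvk⟩ := mem_iUnion₂.mp this
  exact ⟨k, Finset.mem_range.mp hk, (cubeCenter_mem_cubeAt_iff.mp hvk).symm⟩

end Cubes

section Corners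

variable {d : ℕ} (a : Fin d → ℤ) (s : ℕ)

def boxCorner (e : Fin d → Bool) : Fin d → ℤ :=
  fun i => if e i then a i + s - 1 else a i

lemma boxCorner_bounds (hs : 1 ≤ s) (e : Fin d → Bool) (i : Fin d) :
    a i ≤ boxCorner a s e i ∧ boxCorner a s e i < a i + s := by
  unfold boxCorner
  split <;> omega

lemma exists_one_lt_abs_sub_boxCorner (hs : 3 ≤ s) {e e' : Fin d → Bool} (he : e ≠ e') :
    ∃ j, 1 < |boxCorner a s e j - boxCorner a s e' j| := by
  obtain ⟨j, hj⟩ := Function.ne_iff.mp he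
  refine ⟨j, ?_⟩
  unfold boxCorner
  rw [lt_abs]
  revert hj
  cases e j <;> cases e' j <;> simp <;> omega

lemma card_le_of_near_boxCorner (e : Fin d → Bool) (S : Finset (Fin d → ℤ))
    (hbox : ∀ w ∈ S, ∀ i, a i ≤ w i ∧ w i < a i + s)
    (hnear : ∀ w ∈ S, ∀ i, |w i - boxCorner a s e i| ≤ 1) : S.card ≤ 2 ^ d := by
  let lo : Fin d → ℤ := fun i => if e i then a i + s - 2 else a i
  have hsub : S ⊆ Fintype.piFinset fun i => Finset.Icc (lo i) (lo i + 1) := by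
    intro w hw
    rw [Fintype.mem_piFinset]
    intro i
    have hb := hbox w hw i
    have hn := abs_le.mp (hnear w hw i)
    simp only [boxCorner, lo, Finset.mem_Icc] at hn ⊢
    cases h : e i <;> simp only [h, Bool.false_eq_true, ↓reduceIte] at hn ⊢ <;> omega
  have htwo : ∀ i, (Finset.Icc (lo i) (lo i + 1)).card = 2 := fun i => by
    rw [Int.card_Icc]
    omega
  calc S.card ≤ _ := Finset.card_le_card hsub
    _ = 2 ^ d := by simp only [Fintype.card_piFinset, htwo, Finset.prod_const, Finset.card_univ,
      Fintype.card_fin]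

end Corners

section Windows

variable {d n m : ℕ} {c : ℕ → Fin d → ℤ}

lemma abs_sub_le_one_of_window_nonempty (hm : m < n)
    (hne : ∀ i, i + m < n → (⋂ k ∈ Finset.Icc i (i + m), cubeAt d (c k)).Nonempty)
    (k l : ℕ) (hk : k < n) (hl : l < n) (hkl : k ≤ l + m) (hlk : l ≤ k + m) (j : Fin d) :
    |c k j - c l j| ≤ 1 := by
  set i := min (min k l) (n - 1 - m)
  obtain ⟨x, hx⟩ := hne i (by omega)
  rw [mem_iInter₂] at hx
  exact abs_sub_le_one_of_mem_cubeAt (hx k (Finset.mem_Icc.mpr (by omega)))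
    (hx l (Finset.mem_Icc.mpr (by omega))) j

variable {s : ℕ} {a : Fin d → ℤ}

lemma boxCorner_visit_near_end (hinj : InjOn c (Iio n))
    (hbox : ∀ k < n, ∀ i, a i ≤ c k i ∧ c k i < a i + s)
    (hclose : ∀ k l, k < n → l < n → k ≤ l + m → l ≤ k + m → ∀ j, |c k j - c l j| ≤ 1)
    (hd : 2 ^ d ≤ 2 * m) {e : Fin d → Bool} {t : ℕ} (ht : t < n)
    (hct : c t = boxCorner a s e) : t < m ∨ n ≤ t + m := by
  by_contra! hmid
  have hcard : ((Finset.Icc (t - m) (t + m)).image c).card = 2 * m + 1 := by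
    rw [Finset.card_image_of_injOn, Nat.card_Icc]
    · omega
    · exact hinj.mono fun k hk => by
        simp only [Finset.coe_Icc, mem_Icc] at hk
        exact mem_Iio.mpr (by omega)
  have hle := card_le_of_near_boxCorner a s e ((Finset.Icc (t - m) (t + m)).image c)
    (by simp only [Finset.mem_image, Finset.mem_Icc]; rintro _ ⟨k, hk, rfl⟩; exact hbox k (by omega))
    (by
      simp only [Finset.mem_image, Finset.mem_Icc]
      rintro _ ⟨k, hk, rfl⟩
      rw [← hct]
      exact hclose k t (by omega) ht (by omega) (by omega))
  omega

lemma boxCorner_visits_far_apart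
    (hclose : ∀ k l, k < n → l < n → k ≤ l + m → l ≤ k + m → ∀ j, |c k j - c l j| ≤ 1)
    (hs : 3 ≤ s) {e e' : Fin d → Bool} (he : e ≠ e') {t t' : ℕ} (ht : t < n) (ht' : t' < n)
    (hct : c t = boxCorner a s e) (hct' : c t' = boxCorner a s e') : t + m < t' ∨ t' + m < t := by
  obtain ⟨j, hj⟩ := exists_one_lt_abs_sub_boxCorner a s hs he
  by_contra! hnear
  have := hclose t t' ht ht' (by omega) (by omega) j
  rw [hct, hct'] at this
  omega

end Windows

lemma IsPolycubicChain.injOn {d n : ℕ} {c : ℕ → Fin d → ℤ} (h : IsPolycubicChain d n c) :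
    InjOn c (Iio n) :=
  fun i hi j hj hij => h.1 i j hi hj hij

/-- A 3D polycubic chain with cubic body `a + [0,s]³` and more than 8 fractions
contains a 5-cubic segment with empty intersection. -/
theorem cubic_body_chain_has_empty_five_segment (s n : ℕ) (c : ℕ → Fin 3 → ℤ)
    (a : Fin 3 → ℤ) (hn : n = s ^ 3) (h8 : 8 < n)
    (hchain : IsPolycubicChain 3 n c)
    (hbody : (⋃ k ∈ Finset.range n, cubeAt 3 (c k)) =
      {x : EuclideanSpace ℝ (Fin 3) | ∀ i, x i ∈ Icc ((a i : ℝ)) ((a i : ℝ) + s)}) :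
    ∃ i, i + 4 < n ∧ (⋂ k ∈ Finset.Icc i (i + 4), cubeAt 3 (c k)) = ∅ := by
  by_contra! hne
  have hs : 3 ≤ s := by
    by_contra! hs
    have : s ^ 3 ≤ 2 ^ 3 := Nat.pow_le_pow_left (by omega) 3
    omega
  have hclose := abs_sub_le_one_of_window_nonempty (m := 4) (by omega) hne
  have hvisit : ∀ e, ∃ t < n, (t < 4 ∨ n ≤ t + 4) ∧ c t = boxCorner a s e := by
    intro e
    obtain ⟨t, ht, hct⟩ :=
      exists_eq_of_iUnion_cubeAt_eq_box hbody (boxCorner_bounds a s (by omega) e)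
    exact ⟨t, ht, boxCorner_visit_near_end hchain.injOn
      (fun k hk => bounds_of_iUnion_cubeAt_eq_box hbody hk) hclose (by norm_num) ht hct, hct⟩
  obtain ⟨t₀, ht₀, hend₀, hc₀⟩ := hvisit ![false, false, false]
  obtain ⟨t₁, ht₁, hend₁, hc₁⟩ := hvisit ![true, false, false]
  obtain ⟨t₂, ht₂, hend₂, hc₂⟩ := hvisit ![false, true, false]
  have h₀₁ := boxCorner_visits_far_apart hclose hs (by decide) ht₀ ht₁ hc₀ hc₁
  have h₀₂ := boxCorner_visits_far_apart hclose hs (by decide) ht₀ ht₂ hc₀ hc₂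
  have h₁₂ := boxCorner_visits_far_apart hclose hs (by decide) ht₁ ht₂ hc₁ hc₂
  omega
end

section
/- Every 4-dimensional facet-continuous polycubic chain Q₁,…,Qₙ with more than one fraction whose body Q₁ ∪ ⋯ ∪ Qₙ is a cube a + [0,s]⁴ (a ∈ ℤ⁴, s ∈ ℕ, n = s⁴) has dilation at least 42.25 (= 169/4). -/
open Set

/-!
Four consecutive cubes `Qᵢ, …, Qᵢ₊₃` contain points at squared distance `∑ₖ (|δₖ| + 1)²`,
where `δ = cᵢ₊₃ - cᵢ`, and this is at least `3 ‖δ‖₁ + d` because `|δₖ| ≤ δₖ²` over `ℤ`.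
The three unit steps of the window give `‖δ‖₁ = 3` unless two of them cancel. Consecutive
steps never cancel, since the corners are distinct; and if the first and third steps cancelled
in both windows starting at `0` and `1`, then `c₄ = c₀`. Hence some window of four cubes has
diameter at least `√(9 + d)`, which for `d = 4` gives dilation at least `13² / 4`.
-/

def IsUnitStep {d : ℕ} (u : Fin d → ℤ) : Prop :=
  ∃ j, u = Pi.single j 1 ∨ u = Pi.single j (-1)

namespace IsUnitStep

variable {d : ℕ} {u v : Fin d → ℤ}

lemma sum_abs (hu : IsUnitStep u) : ∑ k, |u k| = 1 := by
  obtain ⟨j, rfl | rfl⟩ := hu <;> simp [Pi.single_apply, apply_ite abs]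

lemma mul_nonneg_of_add_ne_zero (hu : IsUnitStep u) (hv : IsUnitStep v) (huv : u + v ≠ 0)
    (k : Fin d) : 0 ≤ u k * v k := by
  obtain ⟨j, rfl | rfl⟩ := hu <;> obtain ⟨j', rfl | rfl⟩ := hv <;>
    simp only [Pi.single_apply] <;> split_ifs <;> simp_all [← Pi.single_add]

end IsUnitStep

lemma abs_add_add_of_mul_nonneg {α : Type*} [CommRing α] [LinearOrder α] [IsStrictOrderedRing α]
    {x y z : α} (hxy : 0 ≤ x * y) (hyz : 0 ≤ y * z) (hxz : 0 ≤ x * z) :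
    |x + y + z| = |x| + |y| + |z| := by
  have hmul {a b : α} (h : 0 ≤ a * b) : |a| * |b| = a * b := by rw [← abs_mul, abs_of_nonneg h]
  refine (sq_eq_sq₀ (abs_nonneg _) (by positivity)).1 ?_
  linear_combination sq_abs (x + y + z) - sq_abs x - sq_abs y - sq_abs z -
    2 * hmul hxy - 2 * hmul hyz - 2 * hmul hxz

lemma sum_abs_add_add_eq_three {d : ℕ} {u v w : Fin d → ℤ} (hu : IsUnitStep u)
    (hv : IsUnitStep v) (hw : IsUnitStep w) (huv : u + v ≠ 0) (hvw : v + w ≠ 0)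
    (huw : u + w ≠ 0) : ∑ k, |u k + v k + w k| = 3 := by
  rw [Finset.sum_congr rfl fun k _ => abs_add_add_of_mul_nonneg
    (hu.mul_nonneg_of_add_ne_zero hv huv k) (hv.mul_nonneg_of_add_ne_zero hw hvw k)
    (hu.mul_nonneg_of_add_ne_zero hw huw k)]
  simp only [Finset.sum_add_distrib, hu.sum_abs, hv.sum_abs, hw.sum_abs]
  norm_num

lemma three_mul_sum_abs_add_card_le_sum_sq {ι : Type*} [Fintype ι] (δ : ι → ℤ) :
    3 * ∑ i, |δ i| + Fintype.card ι ≤ ∑ i, (|δ i| + 1) ^ 2 :=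
  calc 3 * ∑ i, |δ i| + Fintype.card ι = ∑ i, (3 * |δ i| + 1) := by
        simp [Finset.mul_sum, Finset.sum_add_distrib]
    _ ≤ ∑ i, (|δ i| + 1) ^ 2 :=
        Finset.sum_le_sum fun i _ => by nlinarith [Int.le_self_sq |δ i|]

section Geometry

variable {d : ℕ}

lemma exists_mem_cubeAt_dist_sq_eq (v w : Fin d → ℤ) :
    ∃ x ∈ cubeAt d v, ∃ y ∈ cubeAt d w,
      dist x y ^ 2 = ∑ i, ((|w i - v i| + 1 : ℤ) : ℝ) ^ 2 := by
  classical
  refine ⟨WithLp.toLp 2 fun i => if v i ≤ w i then (v i : ℝ) else v i + 1, ?_,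
    WithLp.toLp 2 fun i => if v i ≤ w i then (w i : ℝ) + 1 else w i, ?_, ?_⟩
  · intro i
    dsimp only
    split_ifs <;> simp
  · intro i
    dsimp only
    split_ifs <;> simp
  · rw [EuclideanSpace.dist_eq, Real.sq_sqrt (by positivity)]
    refine Finset.sum_congr rfl fun i _ => ?_
    rw [Real.dist_eq, sq_abs]
    dsimp only
    split_ifs with h
    · rw [abs_of_nonneg (sub_nonneg.2 h)]
      push_cast; ring
    · rw [abs_of_neg (sub_neg.2 (not_le.1 h))]
      push_cast; ring

lemma isBounded_cubeAt (v : Fin d → ℤ) : Bornology.IsBounded (cubeAt d v) :=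
  ((isCompact_Icc (a := fun i => (v i : ℝ)) (b := fun i => (v i : ℝ) + 1)).image
    (PiLp.continuous_toLp 2 _)).isBounded.subset fun x hx =>
      ⟨x.ofLp, ⟨fun i => (hx i).1, fun i => (hx i).2⟩, rfl⟩

end Geometry

section Dilation

variable {d n : ℕ} {c : ℕ → Fin d → ℤ}

lemma isBounded_biUnion_cubeAt (s : Finset ℕ) :
    Bornology.IsBounded (⋃ k ∈ s, cubeAt d (c k)) :=
  (Bornology.isBounded_biUnion_finset s).2 fun k _ => isBounded_cubeAt (c k)

lemma bddAbove_dilation_set :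
    BddAbove {w : ℝ | ∃ i j : ℕ, i ≤ j ∧ j < n ∧
      w = Metric.diam (⋃ k ∈ Finset.Icc i j, cubeAt d (c k)) ^ d / ((j - i + 1 : ℕ) : ℝ)} := by
  refine (((Set.finite_Iio n).prod (Set.finite_Iio n)).image fun p : ℕ × ℕ =>
    Metric.diam (⋃ k ∈ Finset.Icc p.1 p.2, cubeAt d (c k)) ^ d /
      ((p.2 - p.1 + 1 : ℕ) : ℝ)).bddAbove.mono ?_
  rintro w ⟨i, j, hij, hjn, rfl⟩
  exact ⟨(i, j), ⟨show i < n by omega, hjn⟩, rfl⟩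

lemma le_chainDilation {i j : ℕ} (hij : i ≤ j) (hjn : j < n) :
    Metric.diam (⋃ k ∈ Finset.Icc i j, cubeAt d (c k)) ^ d / ((j - i + 1 : ℕ) : ℝ) ≤
      chainDilation d n c :=
  le_csSup bddAbove_dilation_set ⟨i, j, hij, hjn, rfl⟩

lemma sum_sq_le_diam_sq {i j : ℕ} (hij : i ≤ j) :
    ∑ k, ((|c j k - c i k| + 1 : ℤ) : ℝ) ^ 2 ≤
      Metric.diam (⋃ k ∈ Finset.Icc i j, cubeAt d (c k)) ^ 2 := by
  obtain ⟨x, hx, y, hy, hxy⟩ := exists_mem_cubeAt_dist_sq_eq (c i) (c j)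
  have mem {k : ℕ} (hk : k ∈ Finset.Icc i j) {z} (hz : z ∈ cubeAt d (c k)) :
      z ∈ ⋃ k ∈ Finset.Icc i j, cubeAt d (c k) := Set.mem_biUnion hk hz
  rw [← hxy]
  gcongr
  exact Metric.dist_le_diam_of_mem (isBounded_biUnion_cubeAt _)
    (mem (Finset.mem_Icc.2 ⟨le_rfl, hij⟩) hx) (mem (Finset.mem_Icc.2 ⟨hij, le_rfl⟩) hy)

end Dilation

section Chain

variable {d n : ℕ} {c : ℕ → Fin d → ℤ}

lemma FacetContinuous.isUnitStep (hfc : FacetContinuous d n c) {i : ℕ} (hi : i + 1 < n) :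
    IsUnitStep (c (i + 1) - c i) := by
  obtain ⟨j, hj, hother⟩ := hfc i hi
  have hsingle : c (i + 1) - c i = Pi.single j (c (i + 1) j - c i j) := by
    ext k
    by_cases hk : k = j
    · subst hk; simp
    · simp [hk, hother k hk]
  exact ⟨j, by rcases hj with h | h <;> [left; right] <;> rw [hsingle, h]⟩

lemma IsPolycubicChain.sub_ne_zero (hchain : IsPolycubicChain d n c) {i j : ℕ} (hi : i < n)
    (hj : j < n) (hij : i ≠ j) : c j - c i ≠ 0 :=
  fun h => hij (hchain.1 i j hi hj (sub_eq_zero.1 h).symm)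

lemma exists_sum_abs_sub_eq_three (hchain : IsPolycubicChain d n c)
    (hfc : FacetContinuous d n c) (hn : 5 ≤ n) :
    ∃ i, i + 3 < n ∧ ∑ k, |c (i + 3) k - c i k| = 3 := by
  set u : ℕ → Fin d → ℤ := fun i => c (i + 1) - c i with hu
  have step_ne (i : ℕ) (hi : i + 2 < n) : u i + u (i + 1) ≠ 0 := by
    have : c (i + 2) - c i = u i + u (i + 1) := by simp only [hu]; abel
    exact this ▸ hchain.sub_ne_zero (by omega) hi (by omega)
  have window (i : ℕ) (hi : i + 3 < n) (h : u i + u (i + 2) ≠ 0) :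
      ∑ k, |c (i + 3) k - c i k| = 3 := by
    have hk (k : Fin d) : c (i + 3) k - c i k = u i k + u (i + 1) k + u (i + 2) k := by
      simp only [hu, Pi.sub_apply]; ring
    simp_rw [hk]
    exact sum_abs_add_add_eq_three (hfc.isUnitStep (by omega)) (hfc.isUnitStep (by omega))
      (hfc.isUnitStep hi) (step_ne i (by omega)) (step_ne (i + 1) hi) h
  by_cases h02 : u 0 + u 2 = 0
  · refine ⟨1, by omega, window 1 (by omega) fun h13 => ?_⟩
    have : c 4 - c 0 = (u 0 + u 2) + (u 1 + u 3) := by simp only [hu]; abel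
    exact hchain.sub_ne_zero (i := 0) (j := 4) (by omega) (by omega) (by omega)
      (by rw [this, h02, h13, add_zero])
  · exact ⟨0, by omega, window 0 (by omega) h02⟩

theorem IsPolycubicChain.sqrt_nine_add_pow_div_four_le_chainDilation
    (hchain : IsPolycubicChain d n c) (hfc : FacetContinuous d n c) (hn : 5 ≤ n) :
    √(9 + d : ℝ) ^ d / 4 ≤ chainDilation d n c := by
  obtain ⟨i, hi, hsum⟩ := exists_sum_abs_sub_eq_three hchain hfc hn
  set D := Metric.diam (⋃ k ∈ Finset.Icc i (i + 3), cubeAt d (c k))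
  have hq : (9 + d : ℝ) ≤ D ^ 2 := by
    have h := three_mul_sum_abs_add_card_le_sum_sq fun k => c (i + 3) k - c i k
    rw [hsum, Fintype.card_fin] at h
    calc (9 + d : ℝ) = ((3 * 3 + d : ℤ) : ℝ) := by push_cast; ring
      _ ≤ ∑ k, ((|c (i + 3) k - c i k| + 1 : ℤ) : ℝ) ^ 2 := by exact_mod_cast h
      _ ≤ D ^ 2 := sum_sq_le_diam_sq (by omega)
  have hD : √(9 + d : ℝ) ≤ D :=
    (Real.sqrt_le_sqrt hq).trans_eq (Real.sqrt_sq Metric.diam_nonneg)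
  calc √(9 + d : ℝ) ^ d / 4 = √(9 + d : ℝ) ^ d / ((i + 3 - i + 1 : ℕ) : ℝ) := by
        rw [show i + 3 - i + 1 = 4 by omega]; norm_num
    _ ≤ D ^ d / ((i + 3 - i + 1 : ℕ) : ℝ) := by gcongr
    _ ≤ chainDilation d n c := le_chainDilation (by omega) hi

end Chain

theorem cubic_body_chain4d_dilation_ge_general (s n : ℕ) (c : ℕ → Fin 4 → ℤ)
    (hn : n = s ^ 4) (h1 : 1 < n)
    (hchain : IsPolycubicChain 4 n c) (hfc : FacetContinuous 4 n c) :
    169 / 4 ≤ chainDilation 4 n c := by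
  have hs : 2 ≤ s := by
    by_contra! hs
    interval_cases s <;> simp_all
  have h5 : 5 ≤ n :=
    calc 5 ≤ 2 ^ 4 := by norm_num
      _ ≤ s ^ 4 := Nat.pow_le_pow_left hs 4
      _ = n := hn.symm
  have h169 : √(9 + (4 : ℕ) : ℝ) ^ 4 = 169 := by
    rw [show 4 = 2 * 2 from rfl, pow_mul, Real.sq_sqrt (by positivity)]
    norm_num
  have key := hchain.sqrt_nine_add_pow_div_four_le_chainDilation hfc h5
  rwa [h169] at key

/-- A 4D facet-continuous polycubic chain with cubic body `a + [0,s]⁴` and more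
than one fraction has dilation at least `42.25 = 169/4`. -/
theorem cubic_body_chain4d_dilation_ge (s n : ℕ) (c : ℕ → Fin 4 → ℤ)
    (a : Fin 4 → ℤ) (hn : n = s ^ 4) (h1 : 1 < n)
    (hchain : IsPolycubicChain 4 n c) (hfc : FacetContinuous 4 n c)
    (hbody : (⋃ k ∈ Finset.range n, cubeAt 4 (c k)) =
      {x : EuclideanSpace ℝ (Fin 4) | ∀ i, x i ∈ Icc ((a i : ℝ)) ((a i : ℝ) + s)}) :
    169 / 4 ≤ chainDilation 4 n c :=
  cubic_body_chain4d_dilation_ge_general s n c hn h1 hchain hfc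
end
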